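/- Let E be a finite-dimensional real inner product space and let φ : E → ℝ be differentiable, L-smooth (gradient L-Lipschitz) and μ-strongly convex with μ > 0, attaining its minimum value φ*. Fix γ_r with 0 < γ_r ≤ 1/L and an integer r ≥ 1. On a probability space, let θ_0, θ_1, …, θ_r be random vectors in E generated by θ_{s+1} = θ_s − γ_r (∇φ(θ_s) + ξ_s), where each noise vector ξ_s has zero conditional expectation given θ_0, …, θ_s and satisfies E[‖ξ_s‖²] ≤ σ_r². Then E[φ(θ_r)] − φ* ≤ (1 − μγ_r)^r (E[φ(θ_0)] − φ*) + (L γ_r² r / 2) σ_r². -/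

import Mathlib

/-!
Along the iteration, the descent lemma for the `L`-smooth `φ` bounds `φ(θ_{s+1})` by
`φ(θ_s) - γ(1 - Lγ/2)‖∇φ(θ_s)‖² + (Lγ² - γ)⟪∇φ(θ_s), ξ_s⟫ + (Lγ²/2)‖ξ_s‖²`. Since `γL ≤ 1`,
at least `(γ/2)‖∇φ(θ_s)‖²` is gained, and strong convexity turns this into
`μγ(φ(θ_s) - φ*)` through the Polyak–Łojasiewicz inequality `2μ(φ - φ*) ≤ ‖∇φ‖²`. The cross
term has zero expectation because `∇φ(θ_s)` is measurable with respect to `θ_0, …, θ_s` while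
`ξ_s` has zero conditional expectation given them. This leaves the one-step recursion
`D_{s+1} ≤ (1 - μγ) D_s + (Lγ²/2) σ²` for `D_s = E[φ(θ_s)] - φ*`, which unrolls to the claim.
-/

open MeasureTheory ProbabilityTheory
open scoped RealInnerProductSpace

theorem continuous_of_forall_norm_sub_le_mul {E F : Type*} [SeminormedAddCommGroup E]
    [SeminormedAddCommGroup F] {f : E → F} {L : ℝ} (h : ∀ x y, ‖f y - f x‖ ≤ L * ‖y - x‖) :
    Continuous f :=
  (LipschitzWith.of_dist_le' fun x y => by simpa only [dist_eq_norm] using h y x).continuous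

section Smooth

variable {E : Type*} [NormedAddCommGroup E] [InnerProductSpace ℝ E]
  {φ : E → ℝ} {φ' : E → E} {L : ℝ}

theorem le_add_inner_add_sq_of_lipschitz_gradient
    (hdiff : ∀ θ, HasFDerivAt φ (innerSL ℝ (φ' θ)) θ)
    (hsmooth : ∀ θ θ', ‖φ' θ' - φ' θ‖ ≤ L * ‖θ' - θ‖) (x y : E) :
    φ y ≤ φ x + ⟪φ' x, y - x⟫ + L / 2 * ‖y - x‖ ^ 2 := by
  set v := y - x
  have hline : ∀ t : ℝ, HasDerivAt (fun t : ℝ => φ (x + t • v)) ⟪φ' (x + t • v), v⟫ t :=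
    fun t => (hdiff _).comp_hasDerivAt t <|
      (((hasDerivAt_id t).smul_const v).const_add x).congr_deriv (one_smul ℝ v)
  have hmodel : ∀ t : ℝ, HasDerivAt (fun t : ℝ => φ x + t * ⟪φ' x, v⟫ + L / 2 * t ^ 2 * ‖v‖ ^ 2)
      (⟪φ' x, v⟫ + L * t * ‖v‖ ^ 2) t := fun t =>
    ((((hasDerivAt_id t).mul_const ⟪φ' x, v⟫).const_add (φ x)).add
      (((hasDerivAt_pow 2 t).const_mul (L / 2)).mul_const (‖v‖ ^ 2))).congr_deriv
        (by push_cast; ring)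
  have hslope : ∀ t ∈ Set.Ico (0 : ℝ) 1, ⟪φ' (x + t • v), v⟫ ≤ ⟪φ' x, v⟫ + L * t * ‖v‖ ^ 2 := by
    rintro t ⟨ht, -⟩
    have hgrad : ‖φ' (x + t • v) - φ' x‖ ≤ L * t * ‖v‖ := by
      simpa [norm_smul, abs_of_nonneg ht, mul_assoc] using hsmooth x (x + t • v)
    calc ⟪φ' (x + t • v), v⟫ = ⟪φ' x, v⟫ + ⟪φ' (x + t • v) - φ' x, v⟫ := by
          rw [inner_sub_left]; ring
      _ ≤ ⟪φ' x, v⟫ + ‖φ' (x + t • v) - φ' x‖ * ‖v‖ := by gcongr; exact real_inner_le_norm _ _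
      _ ≤ ⟪φ' x, v⟫ + L * t * ‖v‖ * ‖v‖ := by gcongr
      _ = ⟪φ' x, v⟫ + L * t * ‖v‖ ^ 2 := by ring
  have := image_le_of_deriv_right_le_deriv_boundary
    (fun t _ => (hline t).continuousAt.continuousWithinAt)
    (fun t _ => (hline t).hasDerivWithinAt) (by simp)
    (fun t _ => (hmodel t).continuousAt.continuousWithinAt)
    (fun t _ => (hmodel t).hasDerivWithinAt) hslope (b := 1) (Set.right_mem_Icc.2 zero_le_one)
  simpa [v] using this

theorem sq_norm_gradient_le_of_lipschitz_gradient
    (hdiff : ∀ θ, HasFDerivAt φ (innerSL ℝ (φ' θ)) θ)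
    (hsmooth : ∀ θ θ', ‖φ' θ' - φ' θ‖ ≤ L * ‖θ' - θ‖) (hL : 0 < L)
    {φstar : ℝ} (hlb : ∀ θ, φstar ≤ φ θ) (z : E) :
    ‖φ' z‖ ^ 2 ≤ 2 * L * (φ z - φstar) := by
  have h := le_add_inner_add_sq_of_lipschitz_gradient hdiff hsmooth z (z - L⁻¹ • φ' z)
  rw [sub_sub_cancel_left, inner_neg_right, real_inner_smul_right, real_inner_self_eq_norm_sq,
    norm_neg, norm_smul, Real.norm_of_nonneg (inv_nonneg.2 hL.le)] at h
  have hval : L⁻¹ * ‖φ' z‖ ^ 2 - L / 2 * (L⁻¹ * ‖φ' z‖) ^ 2 = ‖φ' z‖ ^ 2 / (2 * L) := by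
    field_simp; ring
  have hgap : ‖φ' z‖ ^ 2 / (2 * L) ≤ φ z - φstar := by linarith [hlb (z - L⁻¹ • φ' z)]
  rwa [div_le_iff₀ (by positivity), mul_comm] at hgap

theorem polyak_lojasiewicz_of_strongConvex {μ : ℝ} (hμ : 0 ≤ μ)
    (hsc : ∀ θ θ', φ θ' ≥ φ θ + ⟪φ' θ, θ' - θ⟫ + μ / 2 * ‖θ' - θ‖ ^ 2)
    (θstar z : E) :
    2 * μ * (φ z - φ θstar) ≤ ‖φ' z‖ ^ 2 := by
  have hsq : 0 ≤ ‖φ' z + μ • (θstar - z)‖ ^ 2 := sq_nonneg _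
  rw [norm_add_sq_real, real_inner_smul_right, norm_smul, Real.norm_of_nonneg hμ, mul_pow] at hsq
  nlinarith [mul_le_mul_of_nonneg_left (hsc z θstar) hμ]

theorem le_of_strongConvex_of_lipschitz_gradient [Nontrivial E] {μ : ℝ}
    (hdiff : ∀ θ, HasFDerivAt φ (innerSL ℝ (φ' θ)) θ)
    (hsmooth : ∀ θ θ', ‖φ' θ' - φ' θ‖ ≤ L * ‖θ' - θ‖)
    (hsc : ∀ θ θ', φ θ' ≥ φ θ + ⟪φ' θ, θ' - θ⟫ + μ / 2 * ‖θ' - θ‖ ^ 2) : μ ≤ L := by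
  obtain ⟨v, hv⟩ := exists_ne (0 : E)
  have hupper := le_add_inner_add_sq_of_lipschitz_gradient hdiff hsmooth 0 v
  have hlower := hsc 0 v
  have hv2 : 0 < ‖v - 0‖ ^ 2 := by simpa using pow_pos (norm_pos_iff.2 hv) 2
  nlinarith

theorem sub_le_of_noisy_gradient_step
    (hdiff : ∀ θ, HasFDerivAt φ (innerSL ℝ (φ' θ)) θ)
    (hsmooth : ∀ θ θ', ‖φ' θ' - φ' θ‖ ≤ L * ‖θ' - θ‖) {μ γ φstar : ℝ}
    (hPL : ∀ z, 2 * μ * (φ z - φstar) ≤ ‖φ' z‖ ^ 2) (hγ : 0 ≤ γ) (hγL : γ * L ≤ 1) (x e : E) :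
    φ (x - γ • (φ' x + e)) - φstar ≤ (1 - μ * γ) * (φ x - φstar)
      + (L * γ ^ 2 - γ) * ⟪φ' x, e⟫ + L * γ ^ 2 / 2 * ‖e‖ ^ 2 := by
  have h := le_add_inner_add_sq_of_lipschitz_gradient hdiff hsmooth x (x - γ • (φ' x + e))
  rw [sub_sub_cancel_left, inner_neg_right, real_inner_smul_right, inner_add_right,
    real_inner_self_eq_norm_sq, norm_neg, norm_smul, Real.norm_of_nonneg hγ, mul_pow,
    norm_add_sq_real] at h
  nlinarith [mul_nonneg (mul_nonneg hγ (sub_nonneg.2 hγL)) (sq_nonneg ‖φ' x‖),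
    mul_nonneg hγ (sub_nonneg.2 (hPL x))]

end Smooth

section Expectation

variable {E : Type*} [NormedAddCommGroup E] [InnerProductSpace ℝ E]
  {Ω : Type*} {m m₀ : MeasurableSpace Ω} {P : Measure Ω}

theorem MeasureTheory.MemLp.integrable_inner {X Y : Ω → E} (hX : MemLp X 2 P)
    (hY : MemLp Y 2 P) : Integrable (fun ω => ⟪X ω, Y ω⟫) P :=
  memLp_one_iff_integrable.1 <| hX.of_bilin (fun x y => ⟪x, y⟫) 1 hY (hX.1.inner hY.1)
    (ae_of_all _ fun ω => by simpa using nnnorm_inner_le_nnnorm (𝕜 := ℝ) (X ω) (Y ω))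

theorem integral_inner_eq_zero_of_condExp_eq_zero [CompleteSpace E] [IsFiniteMeasure P]
    (hm : m ≤ m₀) {X ξ : Ω → E} (hX : StronglyMeasurable[m] X) (hξ : Integrable ξ P)
    (hXξ : Integrable (fun ω => ⟪X ω, ξ ω⟫) P) (hcond : P[ξ | m] =ᵐ[P] 0) :
    ∫ ω, ⟪X ω, ξ ω⟫ ∂P = 0 := by
  have hpull : P[fun ω => ⟪X ω, ξ ω⟫ | m] =ᵐ[P] fun ω => ⟪X ω, P[ξ | m] ω⟫ :=
    condExp_bilin_of_stronglyMeasurable_left (innerSL ℝ) hX hXξ hξ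
  calc ∫ ω, ⟪X ω, ξ ω⟫ ∂P = ∫ ω, (P[fun ω => ⟪X ω, ξ ω⟫ | m]) ω ∂P := (integral_condExp hm).symm
    _ = 0 := by
      rw [integral_congr_ae hpull]
      refine integral_eq_zero_of_ae ?_
      filter_upwards [hcond] with ω hω
      simp [hω]

variable {φ : E → ℝ} {φ' : E → E} {L : ℝ}

theorem memLp_two_gradient_comp [IsFiniteMeasure P]
    (hdiff : ∀ θ, HasFDerivAt φ (innerSL ℝ (φ' θ)) θ)
    (hsmooth : ∀ θ θ', ‖φ' θ' - φ' θ‖ ≤ L * ‖θ' - θ‖) (hL : 0 < L)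
    {φstar : ℝ} (hlb : ∀ θ, φstar ≤ φ θ) {x : Ω → E} (hx : AEStronglyMeasurable x P)
    (hφx : Integrable (fun ω => φ (x ω)) P) : MemLp (fun ω => φ' (x ω)) 2 P := by
  have hmeas : AEStronglyMeasurable (fun ω => φ' (x ω)) P :=
    (continuous_of_forall_norm_sub_le_mul hsmooth).comp_aestronglyMeasurable hx
  refine (memLp_two_iff_integrable_sq_norm hmeas).2 <|
    ((hφx.sub (integrable_const φstar)).const_mul (2 * L)).mono' (hmeas.norm.pow 2) <|
      ae_of_all _ fun ω => ?_
  rw [Real.norm_of_nonneg (by positivity)]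
  exact sq_norm_gradient_le_of_lipschitz_gradient hdiff hsmooth hL hlb (x ω)

theorem integral_sub_le_of_noisy_gradient_step [CompleteSpace E] [IsProbabilityMeasure P]
    (hdiff : ∀ θ, HasFDerivAt φ (innerSL ℝ (φ' θ)) θ)
    (hsmooth : ∀ θ θ', ‖φ' θ' - φ' θ‖ ≤ L * ‖θ' - θ‖) (hL : 0 < L) {μ γ φstar σ : ℝ}
    (hlb : ∀ θ, φstar ≤ φ θ) (hPL : ∀ z, 2 * μ * (φ z - φstar) ≤ ‖φ' z‖ ^ 2)
    (hγ : 0 ≤ γ) (hγL : γ * L ≤ 1) (hm : m ≤ m₀) {x y e : Ω → E}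
    (hx : StronglyMeasurable[m] x) (hy : ∀ ω, y ω = x ω - γ • (φ' (x ω) + e ω))
    (hφx : Integrable (fun ω => φ (x ω)) P) (hφy : Integrable (fun ω => φ (y ω)) P)
    (he : Integrable e P) (hcond : P[e | m] =ᵐ[P] 0)
    (he₂ : Integrable (fun ω => ‖e ω‖ ^ 2) P) (hvar : ∫ ω, ‖e ω‖ ^ 2 ∂P ≤ σ ^ 2) :
    ∫ ω, φ (y ω) ∂P - φstar ≤ (1 - μ * γ) * (∫ ω, φ (x ω) ∂P - φstar) + L * γ ^ 2 / 2 * σ ^ 2 := by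
  have hxe : Integrable (fun ω => ⟪φ' (x ω), e ω⟫) P :=
    (memLp_two_gradient_comp hdiff hsmooth hL hlb (hx.mono hm).aestronglyMeasurable
      hφx).integrable_inner ((memLp_two_iff_integrable_sq_norm he.1).2 he₂)
  have hxe₀ : ∫ ω, ⟪φ' (x ω), e ω⟫ ∂P = 0 :=
    integral_inner_eq_zero_of_condExp_eq_zero hm
      ((continuous_of_forall_norm_sub_le_mul hsmooth).comp_stronglyMeasurable hx) he hxe hcond
  have h₁ : Integrable (fun ω => (1 - μ * γ) * (φ (x ω) - φstar)) P :=
    (hφx.sub (integrable_const φstar)).const_mul _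
  have h₂ : Integrable (fun ω => (L * γ ^ 2 - γ) * ⟪φ' (x ω), e ω⟫) P := hxe.const_mul _
  have h₁₂ : Integrable (fun ω => (1 - μ * γ) * (φ (x ω) - φstar)
      + (L * γ ^ 2 - γ) * ⟪φ' (x ω), e ω⟫) P := h₁.add h₂
  have h₃ : Integrable (fun ω => L * γ ^ 2 / 2 * ‖e ω‖ ^ 2) P := he₂.const_mul _
  calc ∫ ω, φ (y ω) ∂P - φstar = ∫ ω, (φ (y ω) - φstar) ∂P := by
        rw [integral_sub hφy (integrable_const φstar), integral_const]
        simp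
    _ ≤ ∫ ω, ((1 - μ * γ) * (φ (x ω) - φstar) + (L * γ ^ 2 - γ) * ⟪φ' (x ω), e ω⟫
          + L * γ ^ 2 / 2 * ‖e ω‖ ^ 2) ∂P :=
        integral_mono (hφy.sub (integrable_const φstar)) (h₁₂.add h₃) fun ω => by
          simpa only [hy] using sub_le_of_noisy_gradient_step hdiff hsmooth hPL hγ hγL (x ω) (e ω)
    _ = (1 - μ * γ) * (∫ ω, φ (x ω) ∂P - φstar) + L * γ ^ 2 / 2 * ∫ ω, ‖e ω‖ ^ 2 ∂P := by
        rw [integral_add h₁₂ h₃, integral_add h₁ h₂, integral_const_mul,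
          integral_const_mul, integral_const_mul, hxe₀, integral_sub hφx (integrable_const _)]
        simp
    _ ≤ (1 - μ * γ) * (∫ ω, φ (x ω) ∂P - φstar) + L * γ ^ 2 / 2 * σ ^ 2 := by
        gcongr

end Expectation

theorem le_pow_mul_add_of_le_mul_add {D : ℕ → ℝ} {a c : ℝ} (ha₀ : 0 ≤ a) (ha₁ : a ≤ 1)
    (hc : 0 ≤ c) (hstep : ∀ n, D (n + 1) ≤ a * D n + c) (n : ℕ) :
    D n ≤ a ^ n * D 0 + n * c := by
  induction n with
  | zero => simp
  | succ n ih =>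
    calc D (n + 1) ≤ a * D n + c := hstep n
      _ ≤ a * (a ^ n * D 0 + n * c) + c := by gcongr
      _ = a ^ (n + 1) * D 0 + (a * (n * c) + c) := by ring
      _ ≤ a ^ (n + 1) * D 0 + (n + 1 : ℕ) * c := by
        push_cast
        linarith [mul_le_of_le_one_left (mul_nonneg n.cast_nonneg hc) ha₁]

theorem reserve_r_step_descent_general {E : Type*} [NormedAddCommGroup E] [InnerProductSpace ℝ E]
    [FiniteDimensional ℝ E] [MeasurableSpace E] [BorelSpace E]
    {Ω : Type*} [MeasureSpace Ω] [IsProbabilityMeasure (ℙ : Measure Ω)]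
    (φ : E → ℝ) (φ' : E → E) (L μ : ℝ) (hμ : 0 < μ)
    (hdiff : ∀ θ : E, HasFDerivAt φ (innerSL ℝ (φ' θ)) θ)
    (hsmooth : ∀ θ θ' : E, ‖φ' θ' - φ' θ‖ ≤ L * ‖θ' - θ‖)
    (hsc : ∀ θ θ' : E, φ θ' ≥ φ θ + ⟪φ' θ, θ' - θ⟫ + μ / 2 * ‖θ' - θ‖ ^ 2)
    (φstar : ℝ) (θstar : E) (hlb : ∀ θ : E, φstar ≤ φ θ) (hatt : φ θstar = φstar)
    (γr : ℝ) (hγr0 : 0 < γr) (hγrL : γr ≤ 1 / L)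
    (r : ℕ)
    (θ : ℕ → Ω → E) (ξ : ℕ → Ω → E)
    (hθm : ∀ s, Measurable (θ s))
    (hiter : ∀ s : ℕ, ∀ ω : Ω, θ (s + 1) ω = θ s ω - γr • (φ' (θ s ω) + ξ s ω))
    (hξint : ∀ s, Integrable (ξ s) ℙ)
    (hcond : ∀ s : ℕ,
      ℙ[ξ s | ⨆ i ≤ s, MeasurableSpace.comap (θ i) inferInstance] =ᵐ[ℙ] 0)
    (σr : ℝ) (hξ2int : ∀ s, Integrable (fun ω => ‖ξ s ω‖ ^ 2) ℙ)
    (hvar : ∀ s : ℕ, ∫ ω, ‖ξ s ω‖ ^ 2 ∂ℙ ≤ σr ^ 2)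
    (hφint : ∀ s, Integrable (fun ω => φ (θ s ω)) ℙ) :
    (∫ ω, φ (θ r ω) ∂ℙ) - φstar
      ≤ (1 - μ * γr) ^ r * ((∫ ω, φ (θ 0 ω) ∂ℙ) - φstar)
        + L * γr ^ 2 * r / 2 * σr ^ 2 := by
  have hL : 0 < L := one_div_pos.1 (hγr0.trans_le hγrL)
  have hc : 0 ≤ L * γr ^ 2 / 2 * σr ^ 2 := by
    have := (integral_nonneg fun ω => sq_nonneg ‖ξ 0 ω‖).trans (hvar 0)
    positivity
  rcases subsingleton_or_nontrivial E with hE | hE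
  -- on the zero space `μ ≤ L` may fail, but every iterate is the minimiser
  · have hθ : ∀ s ω, φ (θ s ω) = φstar := fun s ω => by
      rw [Subsingleton.elim (θ s ω) θstar, hatt]
    simp only [hθ, integral_const, probReal_univ, one_smul, sub_self, mul_zero, zero_add]
    have := mul_nonneg (Nat.cast_nonneg r) hc
    linarith
  have hγL : γr * L ≤ 1 := (le_div_iff₀ hL).1 (by simpa using hγrL)
  have hμL := le_of_strongConvex_of_lipschitz_gradient hdiff hsmooth hsc
  have hPL : ∀ z, 2 * μ * (φ z - φstar) ≤ ‖φ' z‖ ^ 2 :=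
    hatt ▸ polyak_lojasiewicz_of_strongConvex hμ.le hsc θstar
  have hstep : ∀ s, (∫ ω, φ (θ (s + 1) ω) ∂ℙ) - φstar
      ≤ (1 - μ * γr) * ((∫ ω, φ (θ s ω) ∂ℙ) - φstar) + L * γr ^ 2 / 2 * σr ^ 2 := fun s =>
    integral_sub_le_of_noisy_gradient_step hdiff hsmooth hL hlb hPL hγr0.le hγL
      (iSup₂_le fun i _ => (hθm i).comap_le)
      (Measurable.of_comap_le <| le_iSup₂ (f := fun i (_ : i ≤ s) =>
        MeasurableSpace.comap (θ i) inferInstance) s le_rfl).stronglyMeasurable (hiter s)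
      (hφint s) (hφint (s + 1)) (hξint s) (hcond s) (hξ2int s) (hvar s)
  have := le_pow_mul_add_of_le_mul_add (D := fun n => (∫ ω, φ (θ n ω) ∂ℙ) - φstar)
    (by linarith [mul_le_mul_of_nonneg_left hμL hγr0.le]) (by linarith [mul_pos hμ hγr0])
    hc hstep r
  linarith

/-- **Reserve r-step descent (Proposition 2, ε_r = 0).** Let `E` be a finite-dimensional
real inner product space and `φ : E → ℝ` be differentiable with gradient `φ'`, `L`-smooth
and `μ`-strongly convex (`μ > 0`), attaining its minimum value `φ*`. Fix `0 < γ_r ≤ 1/L` and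
an integer `r ≥ 1`. Let `θ_0, …, θ_r` be random vectors generated by
`θ_{s+1} = θ_s - γ_r (∇φ(θ_s) + ξ_s)`, where each noise `ξ_s` has zero conditional
expectation given `θ_0, …, θ_s` and satisfies `E[‖ξ_s‖²] ≤ σ_r²`. Then
`E[φ(θ_r)] - φ* ≤ (1 - μγ_r)^r (E[φ(θ_0)] - φ*) + (L γ_r² r / 2) σ_r²`. -/
theorem reserve_r_step_descent {E : Type*} [NormedAddCommGroup E] [InnerProductSpace ℝ E]
    [FiniteDimensional ℝ E] [MeasurableSpace E] [BorelSpace E]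
    {Ω : Type*} [MeasureSpace Ω] [IsProbabilityMeasure (ℙ : Measure Ω)]
    (φ : E → ℝ) (φ' : E → E) (L μ : ℝ) (hμ : 0 < μ)
    (hdiff : ∀ θ : E, HasFDerivAt φ (innerSL ℝ (φ' θ)) θ)
    (hsmooth : ∀ θ θ' : E, ‖φ' θ' - φ' θ‖ ≤ L * ‖θ' - θ‖)
    (hsc : ∀ θ θ' : E, φ θ' ≥ φ θ + ⟪φ' θ, θ' - θ⟫ + μ / 2 * ‖θ' - θ‖ ^ 2)
    (φstar : ℝ) (θstar : E) (hlb : ∀ θ : E, φstar ≤ φ θ) (hatt : φ θstar = φstar)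
    (γr : ℝ) (hγr0 : 0 < γr) (hγrL : γr ≤ 1 / L)
    (r : ℕ) (hr : 1 ≤ r)
    (θ : ℕ → Ω → E) (ξ : ℕ → Ω → E)
    (hθm : ∀ s, Measurable (θ s)) (hξm : ∀ s, Measurable (ξ s))
    (hiter : ∀ s : ℕ, ∀ ω : Ω, θ (s + 1) ω = θ s ω - γr • (φ' (θ s ω) + ξ s ω))
    (hξint : ∀ s, Integrable (ξ s) ℙ)
    (hcond : ∀ s : ℕ,
      ℙ[ξ s | ⨆ i ≤ s, MeasurableSpace.comap (θ i) inferInstance] =ᵐ[ℙ] 0)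
    (σr : ℝ) (hξ2int : ∀ s, Integrable (fun ω => ‖ξ s ω‖ ^ 2) ℙ)
    (hvar : ∀ s : ℕ, ∫ ω, ‖ξ s ω‖ ^ 2 ∂ℙ ≤ σr ^ 2)
    (hφint : ∀ s, Integrable (fun ω => φ (θ s ω)) ℙ) :
    (∫ ω, φ (θ r ω) ∂ℙ) - φstar
      ≤ (1 - μ * γr) ^ r * ((∫ ω, φ (θ 0 ω) ∂ℙ) - φstar)
        + L * γr ^ 2 * r / 2 * σr ^ 2 :=
  reserve_r_step_descent_general φ φ' L μ hμ hdiff hsmooth hsc φstar θstar hlb hatt γr hγr0 hγrL r θ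
    ξ hθm hiter hξint hcond σr hξ2int hvar hφint
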